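/- Let 𝒟 be the 4-cycle decomposition of K₁₀ minus the perfect matching {a₁b₁,a₂b₂,a₃b₃,a₄b₄,s₁s₂} consisting of the cycles (a₁,a₂,a₃,s₂), (a₁,a₃,b₁,b₃), (s₁,a₂,s₂,b₂), (b₁,s₂,b₃,a₄), (b₁,b₂,b₃,s₁), (a₁,s₁,a₃,b₄), (a₁,b₂,a₃,a₄), (b₁,a₂,b₃,b₄), (a₄,s₁,b₄,s₂), (a₂,a₄,b₂,b₄). Then the unique 2-colouring ψ of the ten vertices with no monochromatic cycle in 𝒟 satisfying ψ(aᵢ) = 1 and ψ(bᵢ) = 2 for all i ∈ {1,2,3,4} is the one with ψ(s₁) = 1 and ψ(s₂) = 2. -/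
import Mathlib


/-- A 4-cycle is monochromatic under `ψ` if all four vertices get the same colour. -/
def monoCyc (ψ : Fin 10 → Fin 2) (c : Fin 10 × Fin 10 × Fin 10 × Fin 10) : Prop :=
  ψ c.1 = ψ c.2.1 ∧ ψ c.2.1 = ψ c.2.2.1 ∧ ψ c.2.2.1 = ψ c.2.2.2

/-- The ten listed 4-cycles on vertices `a₁,…,a₄ = 0,…,3`, `b₁,…,b₄ = 4,…,7`,
`s₁ = 8`, `s₂ = 9`. -/
def tenCycles : List (Fin 10 × Fin 10 × Fin 10 × Fin 10) :=
  [(0, 1, 2, 9), (0, 2, 4, 6), (8, 1, 9, 5), (4, 9, 6, 3), (4, 5, 6, 8),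
   (0, 8, 2, 7), (0, 5, 2, 3), (4, 1, 6, 7), (3, 8, 7, 9), (1, 3, 5, 7)]

/-- The unique 2-colouring `ψ` with no monochromatic cycle among the ten cycles and with
`ψ aᵢ = 0`, `ψ bᵢ = 1` for all `i`, is the colouring with `ψ s₁ = 0` and `ψ s₂ = 1`. -/
theorem stmt16 :
    (∀ c ∈ tenCycles, ¬ monoCyc ![0, 0, 0, 0, 1, 1, 1, 1, 0, 1] c) ∧
    (∀ ψ : Fin 10 → Fin 2, (∀ c ∈ tenCycles, ¬ monoCyc ψ c) →
      (∀ i : Fin 10, i.val < 4 → ψ i = 0) →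
      (∀ i : Fin 10, 4 ≤ i.val → i.val < 8 → ψ i = 1) →
      ψ = ![0, 0, 0, 0, 1, 1, 1, 1, 0, 1]) := by
  constructor
  · intro c hc
    fin_cases hc <;> simp [monoCyc] <;> decide
  · intro ψ hcyc ha hb
    have h0 := ha 0 (by decide)
    have h1 := ha 1 (by decide)
    have h2 := ha 2 (by decide)
    have h3 := ha 3 (by decide)
    have h4 := hb 4 (by decide) (by decide)
    have h5 := hb 5 (by decide) (by decide)
    have h6 := hb 6 (by decide) (by decide)
    have h7 := hb 7 (by decide) (by decide)
    have c1 := hcyc (0, 1, 2, 9) (by simp [tenCycles])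
    have c2 := hcyc (4, 5, 6, 8) (by simp [tenCycles])
    simp only [monoCyc] at c1 c2
    have h9 : ψ 9 = 1 := by
      rcases Fin.exists_fin_two.mp ⟨ψ 9, rfl⟩ with h | h
      · exact absurd ⟨h0.trans h1.symm, h1.trans h2.symm, h2.trans h.symm⟩ c1
      · exact h
    have h8 : ψ 8 = 0 := by
      rcases Fin.exists_fin_two.mp ⟨ψ 8, rfl⟩ with h | h
      · exact h
      · exact absurd ⟨h4.trans h5.symm, h5.trans h6.symm, h6.trans h.symm⟩ c2
    funext i
    fin_cases i <;> simp [h0, h1, h2, h3, h4, h5, h6, h7, h8, h9] <;> decide
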